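/- For every α : Finset Q and every β ∈ S_X: E_{α Δ β} = E_α. (Lemma 1, invariance of the propagated-error coset E under stabilizers.) -/

import Mathlib

open Finset
open scoped symmDiff Matrix

namespace CC

variable {Q : Type*} [Fintype Q] [DecidableEq Q]

/-- A subgroup of the abelian group `(Finset Q, ∆)`. -/
def IsSubgroup (S : Set (Finset Q)) : Prop :=
  ∅ ∈ S ∧ ∀ a ∈ S, ∀ b ∈ S, a ∆ b ∈ S

/-- The subgroup of `(Finset Q, ∆)` generated by a set. -/
def closure (T : Set (Finset Q)) : Set (Finset Q) :=
  ⋂₀ {S : Set (Finset Q) | IsSubgroup S ∧ T ⊆ S}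

/-- A CSS stabilizer code on the qubits `Q`. -/
structure CSS (Q : Type*) [Fintype Q] [DecidableEq Q] where
  SX : Set (Finset Q)
  SZ : Set (Finset Q)
  hSX : IsSubgroup SX
  hSZ : IsSubgroup SZ
  comm : ∀ a ∈ SZ, ∀ b ∈ SX, 2 ∣ (a ∩ b).card

def ZX (C : CSS Q) : Set (Finset Q) := {γ | ∀ f ∈ C.SZ, 2 ∣ (γ ∩ f).card}

def ZZ (C : CSS Q) : Set (Finset Q) := {z | ∀ c ∈ C.SX, 2 ∣ (z ∩ c).card}

/-- Duality assumption. -/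
def Dual (C : CSS Q) : Prop :=
  C.SZ = {z | ∀ γ ∈ ZX C, 2 ∣ (z ∩ γ).card} ∧
  C.SX = {c | ∀ z ∈ ZZ C, 2 ∣ (c ∩ z).card}

def LogicalX (C : CSS Q) (l : Finset Q) : Prop := l ∈ ZX C ∧ l ∉ C.SX

def LogicalZ (C : CSS Q) (l : Finset Q) : Prop := l ∈ ZZ C ∧ l ∉ C.SZ

/-- Single-logical-qubit assumption. -/
def SingleQubit (C : CSS Q) : Prop :=
  (ZX C ≠ C.SX ∧ ∀ l l', LogicalX C l → LogicalX C l' → l ∆ l' ∈ C.SX) ∧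
  (ZZ C ≠ C.SZ ∧ ∀ l l', LogicalZ C l → LogicalZ C l' → l ∆ l' ∈ C.SZ)

/-- Intersection axiom. -/
def Inter (C : CSS Q) : Prop :=
  ZZ C = {x | ∃ α ∈ ZX C, ∃ β ∈ ZX C, x = α ∩ β}

def G (C : CSS Q) (α : Finset Q) : Set (Finset Q) :=
  closure (C.SZ ∪ {x | ∃ β ∈ ZX C, x = α ∩ β})

def H (C : CSS Q) (α : Finset Q) : Set (Finset Q) :=
  closure (C.SZ ∪ {x | ∃ β ∈ C.SX, x = α ∩ β})

def Zof (K : Set (Finset Q)) : Set (Finset Q) := {γ | ∀ h ∈ K, 2 ∣ (γ ∩ h).card}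

def Tolerable (C : CSS Q) (α : Finset Q) : Prop := ∀ z ∈ G C α, ¬ LogicalZ C z

def g (b : Q → ℤ) (s : Finset Q) : ℤ := ∑ q ∈ s, b q

/-- T-invariance assumption. -/
def TInv (C : CSS Q) (b : Q → ℤ) : Prop :=
  (∀ β ∈ C.SX, (8 : ℤ) ∣ g b β) ∧
  (∀ β ∈ C.SX, ∀ γ ∈ ZX C, (8 : ℤ) ∣ (g b β - 2 * g b (γ ∩ β)))

def E (C : CSS Q) (b : Q → ℤ) (α : Finset Q) : Set (Finset Q) :=
  {z | ∀ γ ∈ Zof (G C α), g b (γ ∩ α) ≡ 2 * ((z ∩ γ).card : ℤ) [ZMOD 4]}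

/- Quantum setting -/

abbrev M (Q : Type*) [Fintype Q] [DecidableEq Q] :=
  Matrix (Q → ZMod 2) (Q → ZMod 2) ℂ

def supp (v : Q → ZMod 2) : Finset Q := Finset.univ.filter (fun q => v q = 1)

def ind (α : Finset Q) : Q → ZMod 2 := fun q => if q ∈ α then 1 else 0

def XM (α : Finset Q) : M Q :=
  Matrix.of fun u v => if u = v + ind α then (1 : ℂ) else 0

noncomputable def ZM (α : Finset Q) : M Q :=
  Matrix.diagonal fun v => (-1 : ℂ) ^ (supp v ∩ α).card

noncomputable def AM (b : Q → ℤ) (α : Finset Q) : M Q :=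
  Matrix.diagonal fun v => Complex.I ^ (g b (α ∩ supp v))

noncomputable def UM (b : Q → ℤ) : M Q :=
  Matrix.diagonal fun v => Complex.exp (Real.pi * Complex.I / 4) ^ (g b (supp v))

def Encoded (C : CSS Q) (ρ : M Q) : Prop :=
  ρ.trace = 1 ∧
  (∀ c ∈ C.SX, XM c * ρ = ρ ∧ ρ * XM c = ρ) ∧
  (∀ f ∈ C.SZ, ZM f * ρ = ρ ∧ ρ * ZM f = ρ)

instance : Std.Commutative (α := Finset Q) (· ∆ ·) := ⟨symmDiff_comm⟩
instance : Std.Associative (α := Finset Q) (· ∆ ·) := ⟨symmDiff_assoc⟩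

/-- Iterated symmetric difference over a finite index set. -/
def bigΔ {ι : Type*} (s : Finset ι) (f : ι → Finset Q) : Finset Q :=
  s.fold (· ∆ ·) ∅ f

/-! Let `β ∈ S_X` and `γ ∈ Z_X`. For every `γ' ∈ Z_X` the intersection axiom puts `γ ∩ γ'` in `Z_Z`,
so `|β ∩ γ ∩ γ'|` is even and `β ∩ γ ∈ S_Z` by duality; hence `G_{α ∆ β} = G_α`.
For `γ ∈ Z(G_α)` we have `g(γ ∩ (α ∆ β)) = g(γ ∩ α) + g(γ ∩ β) - 2 g(γ ∩ α ∩ β)`. T-invariance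
gives `4 ∣ g(γ ∩ β)`, and `α ∩ β ∈ G_α` makes `|γ ∩ α ∩ β|`, hence `g(γ ∩ α ∩ β)` (as `b` is odd),
even. So both sides of the congruences defining `E_{α ∆ β}` and `E_α` agree mod 4. -/

section Generic

variable {ι : Type*}

lemma g_modEq_card {b : ι → ℤ} (hb : ∀ q, Odd (b q)) (s : Finset ι) :
    g b s ≡ s.card [ZMOD 2] := by
  rw [card_eq_sum_ones, Nat.cast_sum, Nat.cast_one, g]
  exact Int.ModEq.sum fun q _ => (Int.odd_iff.1 (hb q) : b q % 2 = 1)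

variable [DecidableEq ι]

lemma subset_closure (T : Set (Finset ι)) : T ⊆ closure T :=
  fun _ hx _ hS => hS.2 hx

lemma closure_subset {T S : Set (Finset ι)} (hS : IsSubgroup S) (h : T ⊆ S) :
    closure T ⊆ S :=
  fun _ hx => hx S ⟨hS, h⟩

lemma isSubgroup_closure (T : Set (Finset ι)) : IsSubgroup (closure T) :=
  ⟨fun _ hS => hS.1.1, fun _ ha _ hc S hS => hS.1.2 _ (ha S hS) _ (hc S hS)⟩

lemma inter_symmDiff_distrib_left (s t u : Finset ι) : s ∩ t ∆ u = (s ∩ t) ∆ (s ∩ u) :=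
  inf_symmDiff_distrib_left s t u

lemma inter_symmDiff_distrib_right (s t u : Finset ι) : s ∆ t ∩ u = (s ∩ u) ∆ (t ∩ u) :=
  inf_symmDiff_distrib_right s t u

lemma g_symmDiff (b : ι → ℤ) (s t : Finset ι) :
    g b (s ∆ t) = g b s + g b t - 2 * g b (s ∩ t) := by
  have hunion : g b (s ∪ t) + g b (s ∩ t) = g b s + g b t := sum_union_inter
  have hsdiff : g b (s ∆ t) + g b (s ∩ t) = g b (s ∪ t) := by
    rw [symmDiff_eq_sup_sdiff_inf, sup_eq_union, inf_eq_inter, g, g, g,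
      sum_sdiff inter_subset_union]
  linarith

end Generic

lemma mem_ZX_of_mem_SX {C : CSS Q} {β : Finset Q} (hβ : β ∈ C.SX) : β ∈ ZX C :=
  fun f hf => inter_comm f β ▸ C.comm f hf β hβ

lemma inter_mem_SZ {C : CSS Q} (hdual : Dual C) (hinter : Inter C)
    {β γ : Finset Q} (hβ : β ∈ C.SX) (hγ : γ ∈ ZX C) : β ∩ γ ∈ C.SZ := by
  rw [hdual.1]
  intro γ' hγ'
  have hZZ : γ ∩ γ' ∈ ZZ C := by
    rw [hinter]
    exact ⟨γ, hγ, γ', hγ', rfl⟩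
  rw [inter_assoc, inter_comm]
  exact hZZ β hβ

lemma mem_G_of_mem_SZ {C : CSS Q} {α f : Finset Q} (hf : f ∈ C.SZ) : f ∈ G C α :=
  subset_closure _ (Or.inl hf)

lemma inter_mem_G {C : CSS Q} (α : Finset Q) {β : Finset Q} (hβ : β ∈ ZX C) :
    α ∩ β ∈ G C α :=
  subset_closure _ (Or.inr ⟨β, hβ, rfl⟩)

lemma G_symmDiff_subset {C : CSS Q} (hdual : Dual C) (hinter : Inter C)
    (α : Finset Q) {β : Finset Q} (hβ : β ∈ C.SX) : G C (α ∆ β) ⊆ G C α := by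
  refine closure_subset (isSubgroup_closure _) ?_
  rintro _ (hf | ⟨γ, hγ, rfl⟩)
  · exact mem_G_of_mem_SZ hf
  · rw [inter_symmDiff_distrib_right]
    exact (isSubgroup_closure _).2 _ (inter_mem_G α hγ) _
      (mem_G_of_mem_SZ (inter_mem_SZ hdual hinter hβ hγ))

lemma G_symmDiff {C : CSS Q} (hdual : Dual C) (hinter : Inter C)
    (α : Finset Q) {β : Finset Q} (hβ : β ∈ C.SX) : G C (α ∆ β) = G C α := by
  refine (G_symmDiff_subset hdual hinter α hβ).antisymm ?_
  simpa using G_symmDiff_subset hdual hinter (α ∆ β) hβ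

lemma mem_ZX_of_mem_Zof_G {C : CSS Q} {α γ : Finset Q} (hγ : γ ∈ Zof (G C α)) : γ ∈ ZX C :=
  fun f hf => hγ f (mem_G_of_mem_SZ hf)

lemma four_dvd_g_inter {C : CSS Q} {b : Q → ℤ} (htinv : TInv C b)
    {β γ : Finset Q} (hβ : β ∈ C.SX) (hγ : γ ∈ ZX C) : (4 : ℤ) ∣ g b (γ ∩ β) := by
  obtain ⟨k, hk⟩ := htinv.1 β hβ
  obtain ⟨m, hm⟩ := htinv.2 β hβ γ hγ
  exact ⟨k - m, by linarith⟩

lemma g_inter_symmDiff_modEq {C : CSS Q} {b : Q → ℤ} (hb : ∀ q, Odd (b q))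
    (htinv : TInv C b) {α β γ : Finset Q} (hβ : β ∈ C.SX) (hγ : γ ∈ Zof (G C α)) :
    g b (γ ∩ (α ∆ β)) ≡ g b (γ ∩ α) [ZMOD 4] := by
  have hsplit : g b (γ ∩ (α ∆ β)) =
      g b (γ ∩ α) + g b (γ ∩ β) - 2 * g b (γ ∩ (α ∩ β)) := by
    rw [inter_symmDiff_distrib_left, g_symmDiff, ← inter_inter_distrib_left]
  obtain ⟨k, hk⟩ := four_dvd_g_inter htinv hβ (mem_ZX_of_mem_Zof_G hγ)
  obtain ⟨m, hm⟩ := ((g_modEq_card hb _).dvd_iff).2 <| Int.natCast_dvd_natCast.2 <|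
    hγ _ (inter_mem_G α (mem_ZX_of_mem_SX hβ))
  exact Int.modEq_iff_dvd.2 ⟨m - k, by rw [hsplit, hk, hm]; ring⟩

/-- Lemma 1: invariance of the propagated-error coset `E` under stabilizers. -/
theorem E_invariance
    (C : CSS Q) (b : Q → ℤ) (hb : ∀ q, Odd (b q))
    (hdual : Dual C) (hinter : Inter C) (htinv : TInv C b)
    (α β : Finset Q) (hβ : β ∈ C.SX) :
    E C b (α ∆ β) = E C b α := by
  unfold E
  rw [G_symmDiff hdual hinter α hβ]
  ext z
  refine forall₂_congr fun γ hγ => ?_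
  have hmod := g_inter_symmDiff_modEq hb htinv hβ hγ
  exact ⟨hmod.symm.trans, hmod.trans⟩

end CC
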